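/- Let θ ∈ {0, 1/2}, and let ε be a complex number satisfying either Re ε > 0 and ε⁻¹ ∉ ℤ, or Re ε = 0 and Im ε > 0. Define, for m,n ∈ ℤ and r,s ∈ ℤ+θ: f(m,n) = −n(1+εn)/(1+ε(m+n)), g(m,r) = −(m/2+r)(1+2εr)/(1+2ε(m+r)), h(r,m) = −m(1+εm)/(1+2ε(m+r)), d(r,s) = (1+2εs)/(1+ε(r+s)). Then for all m,n,l ∈ ℤ and r,s,t ∈ ℤ+θ the following hold: f(m,n) − f(n,m) = m − n; g(m,r) − h(r,m) = m/2 − r; d(r,s) + d(s,r) = 2; (m−n)f(m+n,l) = f(n,l)f(m,n+l) − f(m,l)f(n,m+l); (m−n)g(m+n,r) = g(n,r)g(m,n+r) − g(m,r)g(n,m+r); (m/2−r)h(m+r,n) = h(r,n)g(m,n+r) − f(m,n)h(r,m+n); (m/2−r)d(m+r,s) = d(r,s)f(m,r+s) − g(m,s)d(r,m+s); 2f(r+s,m) = h(s,m)d(r,m+s) + h(r,m)d(s,m+r); 2g(r+s,t) = d(s,t)h(r,s+t) + d(r,t)h(s,r+t). -/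
import Mathlib


/-- f(m,n) = −n(1+εn)/(1+ε(m+n)) -/
noncomputable def vf (ε m n : ℂ) : ℂ := -n * (1 + ε * n) / (1 + ε * (m + n))

/-- g(m,r) = −(m/2+r)(1+2εr)/(1+2ε(m+r)) -/
noncomputable def vg (ε m r : ℂ) : ℂ :=
  -(m / 2 + r) * (1 + 2 * ε * r) / (1 + 2 * ε * (m + r))

/-- h(r,m) = −m(1+εm)/(1+2ε(m+r)) -/
noncomputable def vh (ε r m : ℂ) : ℂ := -m * (1 + ε * m) / (1 + 2 * ε * (m + r))

/-- d(r,s) = (1+2εs)/(1+ε(r+s)) -/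
noncomputable def vd (ε r s : ℂ) : ℂ := (1 + 2 * ε * s) / (1 + ε * (r + s))

set_option maxHeartbeats 1600000 in
/-- the explicit functions f, g, h, d satisfy equations (3.2) and (3.3)
of the paper, i.e. they define a compatible left-symmetric superalgebra structure on
the centerless super-Virasoro algebra (existence part of Theorem 3.2). -/
theorem super_virasoro_structure_exists (θ ε : ℂ) (hθ : θ = 0 ∨ θ = 1 / 2)
    (hε : (0 < ε.re ∧ ∀ k : ℤ, ε⁻¹ ≠ (k : ℂ)) ∨ (ε.re = 0 ∧ 0 < ε.im)) :
    ∀ (m n l : ℤ) (r s t : ℂ),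
      (∃ k : ℤ, r = (k : ℂ) + θ) → (∃ k : ℤ, s = (k : ℂ) + θ) →
      (∃ k : ℤ, t = (k : ℂ) + θ) →
      vf ε m n - vf ε n m = (m : ℂ) - (n : ℂ) ∧
      vg ε m r - vh ε r m = (m : ℂ) / 2 - r ∧
      vd ε r s + vd ε s r = 2 ∧
      ((m : ℂ) - (n : ℂ)) * vf ε ((m : ℂ) + (n : ℂ)) l
        = vf ε n l * vf ε m ((n : ℂ) + (l : ℂ)) - vf ε m l * vf ε n ((m : ℂ) + (l : ℂ)) ∧
      ((m : ℂ) - (n : ℂ)) * vg ε ((m : ℂ) + (n : ℂ)) r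
        = vg ε n r * vg ε m ((n : ℂ) + r) - vg ε m r * vg ε n ((m : ℂ) + r) ∧
      ((m : ℂ) / 2 - r) * vh ε ((m : ℂ) + r) n
        = vh ε r n * vg ε m ((n : ℂ) + r) - vf ε m n * vh ε r ((m : ℂ) + (n : ℂ)) ∧
      ((m : ℂ) / 2 - r) * vd ε ((m : ℂ) + r) s
        = vd ε r s * vf ε m (r + s) - vg ε m s * vd ε r ((m : ℂ) + s) ∧
      2 * vf ε (r + s) m
        = vh ε s m * vd ε r ((m : ℂ) + s) + vh ε r m * vd ε s ((m : ℂ) + r) ∧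
      2 * vg ε (r + s) t
        = vd ε s t * vh ε r (s + t) + vd ε r t * vh ε s (r + t) := by
  have key : ∀ k : ℤ, (1 : ℂ) + ε * k ≠ 0 := by
    intro k h
    rcases hε with ⟨hre, hinv⟩ | ⟨h0, him⟩
    · have hk0 : k ≠ 0 := by rintro rfl; simp at h
      have : ε⁻¹ = ((-k : ℤ) : ℂ) := by
        apply inv_eq_of_mul_eq_one_right
        push_cast
        linear_combination -h
      exact hinv (-k) this
    · have h2 := congrArg Complex.re h
      simp [Complex.add_re, Complex.mul_re, h0] at h2
  have mk : ∀ X : ℂ, (∃ K : ℤ, X = 1 + ε * (K : ℂ)) → X ≠ 0 := by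
    rintro X ⟨K, rfl⟩; exact key K
  intro m n l r s t hr hs ht
  obtain ⟨a, ha⟩ := hr
  obtain ⟨b, hb⟩ := hs
  obtain ⟨c, hc⟩ := ht
  obtain ⟨d, hd⟩ : ∃ d : ℤ, θ = (d : ℂ) / 2 := by
    rcases hθ with h | h
    · exact ⟨0, by simp [h]⟩
    · exact ⟨1, by rw [h]; norm_num⟩
  have A1 : (1 : ℂ) + ε * ((m : ℂ) + (n : ℂ)) ≠ 0 :=
    mk _ ⟨m + n, by push_cast; ring⟩
  have A2 : (1 : ℂ) + ε * ((n : ℂ) + (m : ℂ)) ≠ 0 :=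
    mk _ ⟨m + n, by push_cast; ring⟩
  have B1 : (1 : ℂ) + 2 * ε * ((m : ℂ) + r) ≠ 0 :=
    mk _ ⟨2 * m + 2 * a + d, by push_cast [ha, hd]; ring⟩
  have C1 : (1 : ℂ) + ε * (r + s) ≠ 0 :=
    mk _ ⟨a + b + d, by push_cast [ha, hb, hd]; ring⟩
  have C2 : (1 : ℂ) + ε * (s + r) ≠ 0 :=
    mk _ ⟨a + b + d, by push_cast [ha, hb, hd]; ring⟩
  have D1 : (1 : ℂ) + ε * ((m : ℂ) + (n : ℂ) + (l : ℂ)) ≠ 0 :=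
    mk _ ⟨m + n + l, by push_cast; ring⟩
  have D2 : (1 : ℂ) + ε * ((n : ℂ) + (l : ℂ)) ≠ 0 :=
    mk _ ⟨n + l, by push_cast; ring⟩
  have D3 : (1 : ℂ) + ε * ((m : ℂ) + ((n : ℂ) + (l : ℂ))) ≠ 0 :=
    mk _ ⟨m + n + l, by push_cast; ring⟩
  have D4 : (1 : ℂ) + ε * ((m : ℂ) + (l : ℂ)) ≠ 0 :=
    mk _ ⟨m + l, by push_cast; ring⟩
  have D5 : (1 : ℂ) + ε * ((n : ℂ) + ((m : ℂ) + (l : ℂ))) ≠ 0 :=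
    mk _ ⟨m + n + l, by push_cast; ring⟩
  have E1 : (1 : ℂ) + 2 * ε * ((m : ℂ) + (n : ℂ) + r) ≠ 0 :=
    mk _ ⟨2 * m + 2 * n + 2 * a + d, by push_cast [ha, hd]; ring⟩
  have E2 : (1 : ℂ) + 2 * ε * ((n : ℂ) + r) ≠ 0 :=
    mk _ ⟨2 * n + 2 * a + d, by push_cast [ha, hd]; ring⟩
  have E3 : (1 : ℂ) + 2 * ε * ((m : ℂ) + ((n : ℂ) + r)) ≠ 0 :=
    mk _ ⟨2 * m + 2 * n + 2 * a + d, by push_cast [ha, hd]; ring⟩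
  have E4 : (1 : ℂ) + 2 * ε * ((n : ℂ) + ((m : ℂ) + r)) ≠ 0 :=
    mk _ ⟨2 * m + 2 * n + 2 * a + d, by push_cast [ha, hd]; ring⟩
  have G1 : (1 : ℂ) + ε * ((m : ℂ) + r + s) ≠ 0 :=
    mk _ ⟨m + a + b + d, by push_cast [ha, hb, hd]; ring⟩
  have G2 : (1 : ℂ) + ε * ((m : ℂ) + (r + s)) ≠ 0 :=
    mk _ ⟨m + a + b + d, by push_cast [ha, hb, hd]; ring⟩
  have G3 : (1 : ℂ) + 2 * ε * ((m : ℂ) + s) ≠ 0 :=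
    mk _ ⟨2 * m + 2 * b + d, by push_cast [hb, hd]; ring⟩
  have G4 : (1 : ℂ) + ε * (r + ((m : ℂ) + s)) ≠ 0 :=
    mk _ ⟨m + a + b + d, by push_cast [ha, hb, hd]; ring⟩
  have H1 : (1 : ℂ) + ε * (r + s + (m : ℂ)) ≠ 0 :=
    mk _ ⟨m + a + b + d, by push_cast [ha, hb, hd]; ring⟩
  have H2 : (1 : ℂ) + ε * (s + ((m : ℂ) + r)) ≠ 0 :=
    mk _ ⟨m + a + b + d, by push_cast [ha, hb, hd]; ring⟩
  have I1 : (1 : ℂ) + 2 * ε * (r + s + t) ≠ 0 :=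
    mk _ ⟨2 * a + 2 * b + 2 * c + 3 * d, by push_cast [ha, hb, hc, hd]; ring⟩
  have I2 : (1 : ℂ) + ε * (s + t) ≠ 0 :=
    mk _ ⟨b + c + d, by push_cast [hb, hc, hd]; ring⟩
  have I3 : (1 : ℂ) + 2 * ε * (s + t + r) ≠ 0 :=
    mk _ ⟨2 * a + 2 * b + 2 * c + 3 * d, by push_cast [ha, hb, hc, hd]; ring⟩
  have I4 : (1 : ℂ) + ε * (r + t) ≠ 0 :=
    mk _ ⟨a + c + d, by push_cast [ha, hc, hd]; ring⟩
  have I5 : (1 : ℂ) + 2 * ε * (r + t + s) ≠ 0 :=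
    mk _ ⟨2 * a + 2 * b + 2 * c + 3 * d, by push_cast [ha, hb, hc, hd]; ring⟩
  refine ⟨?_, ?_, ?_, ?_, ?_, ?_, ?_, ?_, ?_⟩
  · simp only [vf]; field_simp [A1, A2]; ring
  · simp only [vg, vh]; field_simp [B1]; ring
  · simp only [vd]; field_simp [C1, C2]; ring
  · simp only [vf]; field_simp [D1, D2, D3, D4, D5]; ring
  · simp only [vg]; field_simp [E1, E2, E3, B1, E4]; ring
  · simp only [vf, vg, vh]; field_simp [E4, E2, E3, A1, E1]; ring
  · simp only [vf, vg, vd]; field_simp [G1, C1, G2, G3, G4]; ring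
  · simp only [vf, vh, vd]; field_simp [H1, G3, G4, B1, H2]; ring
  · simp only [vg, vh, vd]; field_simp [I1, I2, I3, I4, I5]; ring
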